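/- arXiv:1005.4513 — 2 statements merged into one kernel-verified Lean document; each statement's English description precedes it below -/
import Mathlib

section
/- Let $0<\alpha<1/2$, $0<\beta\le 1$ with $\min\{\beta,1-\alpha\}>\alpha$, and let $V:[t,t+\bar h]\to\mathbb{R}$ satisfy $V(t)=0$ and $|V(s)-V(\tau)|\le\tilde D|s-\tau|^{\gamma}$ with $\gamma=\min\{\beta,1-\alpha\}$. Suppose $g:[t,t+\bar h]\to\mathbb{R}$ is such that for all $t\le \tau\le s\le t+\bar h$, $\big|\int_\tau^s V(r)\,dg(r)\big|\le \Lambda\,\|V\|_{\alpha,1;[\tau,s]}$ for some constant $\Ambda\ge 0$ (as holds for the generalized Stieltjes integral with $\Lambda=\Lambda_\alpha(g)$). Then $\big|\int_t^s V(r)\,dg(r)\big|\le C(\alpha,\beta)\,\tilde D\,\Lambda\,(s-t)^{1+\min\{\beta-\alpha,\,1-2\alpha\}}$ for all $s\in[t,t+\bar h]$; in particular $\frac{1}{s-t}\int_t^s V(r)\,dg(r)\to 0$ as $s\downarrow t$. -/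
/-!
With `γ = min β (1 - α)` and `c = γ - α > 0`, the Hölder bound and `V t = 0` give
`|V r| / (r - t)^α ≤ D (r - t)^c`, and integrating `D (r - y)^(c - 1)` over `y ∈ [t, r]` bounds the
inner singular integral by `D (r - t)^c / c`. Integrating once more in `r` yields
`‖V‖_{α,1;[t,s]} ≤ D (s - t)^(1 + c) / c`, and `1 + c` is exactly the exponent
`1 + min (β - α) (1 - 2α)`. Since `c > 0`, dividing by `s - t` leaves `(s - t)^c → 0`.
-/

open MeasureTheory intervalIntegral Filter Topology Set

/-- The norm `‖V‖_{α,1;[τ,s]}` controlling the generalized Stieltjes integral. -/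
noncomputable def fracNorm (α : ℝ) (V : ℝ → ℝ) (τ s : ℝ) : ℝ :=
  ∫ r in τ..s, (|V r| / (r - τ) ^ α + ∫ y in τ..r, |V r - V y| / (r - y) ^ (α + 1))

theorem intervalIntegral_mono_of_nonneg_on_Ioo {f g : ℝ → ℝ} {a b : ℝ} (hab : a ≤ b)
    (hf : ∀ x ∈ Ioo a b, 0 ≤ f x) (hg : IntervalIntegrable g volume a b)
    (hfg : ∀ x ∈ Ioo a b, f x ≤ g x) : ∫ x in a..b, f x ≤ ∫ x in a..b, g x := by
  simp only [integral_of_le hab, integral_Ioc_eq_integral_Ioo]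
  exact integral_mono_of_nonneg (ae_restrict_of_forall_mem measurableSet_Ioo hf)
    (hg.1.mono_set Ioo_subset_Ioc_self) (ae_restrict_of_forall_mem measurableSet_Ioo hfg)

theorem integral_sub_rpow_sub_one {c : ℝ} (hc : 0 < c) (t r : ℝ) :
    ∫ y in t..r, (r - y) ^ (c - 1) = (r - t) ^ c / c := by
  rw [integral_comp_sub_left (fun x : ℝ => x ^ (c - 1)) r, sub_self,
    integral_rpow (Or.inl (by linarith)), sub_add_cancel, Real.zero_rpow hc.ne', sub_zero]

theorem integral_rpow_sub {c : ℝ} (hc : -1 < c) (t s : ℝ) :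
    ∫ r in t..s, (r - t) ^ c = (s - t) ^ (c + 1) / (c + 1) := by
  rw [integral_comp_sub_right (fun x : ℝ => x ^ c) t, sub_self, integral_rpow (Or.inl hc),
    Real.zero_rpow (by linarith), sub_zero]

theorem integral_abs_sub_div_rpow_le {V : ℝ → ℝ} {α γ D t r : ℝ} (hαγ : α < γ) (htr : t ≤ r)
    (hV : ∀ y ∈ Ioo t r, |V r - V y| ≤ D * (r - y) ^ γ) :
    ∫ y in t..r, |V r - V y| / (r - y) ^ (α + 1) ≤ D * (r - t) ^ (γ - α) / (γ - α) := by
  have hc : 0 < γ - α := sub_pos.2 hαγ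
  calc ∫ y in t..r, |V r - V y| / (r - y) ^ (α + 1)
      ≤ ∫ y in t..r, D * (r - y) ^ (γ - α - 1) := by
        refine intervalIntegral_mono_of_nonneg_on_Ioo htr (fun y hy => ?_) ?_ (fun y hy => ?_)
        · have : 0 < r - y := sub_pos.2 hy.2
          positivity
        · have h0 : IntervalIntegrable (fun x : ℝ => x ^ (γ - α - 1)) volume 0 (r - t) :=
            intervalIntegral.intervalIntegrable_rpow' (by linarith)
          simpa using (h0.comp_sub_left r).symm.const_mul D
        · have hry : 0 < r - y := sub_pos.2 hy.2
          rw [div_le_iff₀ (Real.rpow_pos_of_pos hry _), mul_assoc, ← Real.rpow_add hry]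
          rw [show γ - α - 1 + (α + 1) = γ by ring]
          exact hV y hy
    _ = D * (r - t) ^ (γ - α) / (γ - α) := by
        rw [intervalIntegral.integral_const_mul, integral_sub_rpow_sub_one hc, mul_div_assoc]

theorem fracNorm_le {V : ℝ → ℝ} {α γ D t s : ℝ} (hαγ : α < γ) (hts : t ≤ s) (hVt : V t = 0)
    (hV : ∀ x ∈ Icc t s, ∀ y ∈ Icc t s, |V x - V y| ≤ D * |x - y| ^ γ) :
    fracNorm α V t s ≤ D * (s - t) ^ (1 + (γ - α)) / (γ - α) := by
  set c := γ - α
  have hc : 0 < c := sub_pos.2 hαγ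
  calc fracNorm α V t s ≤ ∫ r in t..s, (1 + c) / c * D * (r - t) ^ c := by
        refine intervalIntegral_mono_of_nonneg_on_Ioo hts (fun r hr => ?_) ?_ (fun r hr => ?_)
        · have hrt : 0 < r - t := sub_pos.2 hr.1
          have : 0 ≤ ∫ y in t..r, |V r - V y| / (r - y) ^ (α + 1) :=
            integral_nonneg hr.1.le fun y hy => by
              have : 0 ≤ r - y := sub_nonneg.2 hy.2
              positivity
          positivity
        · exact (continuous_const.mul ((continuous_id.sub continuous_const).rpow_const
            fun _ => Or.inr hc.le)).intervalIntegrable _ _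
        · have hrt : 0 < r - t := sub_pos.2 hr.1
          have hr' : r ∈ Icc t s := Ioo_subset_Icc_self hr
          have hVr : |V r| ≤ D * (r - t) ^ γ := by
            simpa [hVt, abs_of_pos hrt] using hV r hr' t (left_mem_Icc.2 hts)
          have hfirst : |V r| / (r - t) ^ α ≤ D * (r - t) ^ c := by
            rwa [div_le_iff₀ (Real.rpow_pos_of_pos hrt _), mul_assoc, ← Real.rpow_add hrt,
              sub_add_cancel]
          have hsecond := integral_abs_sub_div_rpow_le (V := V) (D := D) hαγ hr.1.le
            fun y hy => by
              simpa [abs_of_pos (sub_pos.2 hy.2)] using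
                hV r hr' y ⟨hy.1.le, hy.2.le.trans hr.2.le⟩
          calc _ ≤ D * (r - t) ^ c + D * (r - t) ^ c / c := add_le_add hfirst hsecond
            _ = (1 + c) / c * D * (r - t) ^ c := by field_simp; ring
    _ = D * (s - t) ^ (1 + c) / c := by
        rw [intervalIntegral.integral_const_mul, integral_rpow_sub (by linarith), add_comm c]
        field_simp

theorem tendsto_div_sub_nhdsGT_of_abs_le_rpow {f : ℝ → ℝ} {t c K : ℝ} (hc : 0 < c)
    (hf : ∀ᶠ s in 𝓝[>] t, |f s| ≤ K * (s - t) ^ (1 + c)) :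
    Tendsto (fun s => f s / (s - t)) (𝓝[>] t) (𝓝 0) := by
  have hlim : Tendsto (fun s => K * (s - t) ^ c) (𝓝[>] t) (𝓝 0) := by
    have h : Tendsto (fun s => K * (s - t) ^ c) (𝓝 t) (𝓝 (K * (t - t) ^ c)) :=
      (continuous_const.mul ((continuous_id.sub continuous_const).rpow_const
        fun _ => Or.inr hc.le)).tendsto t
    simpa [Real.zero_rpow hc.ne'] using h.mono_left nhdsWithin_le_nhds
  refine squeeze_zero_norm' ?_ hlim
  filter_upwards [hf, self_mem_nhdsWithin] with s hs hts
  have hst : 0 < s - t := sub_pos.2 hts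
  rwa [Real.norm_eq_abs, abs_div, abs_of_pos hst, div_le_iff₀ hst, mul_assoc,
    ← Real.rpow_add_one hst.ne', add_comm]

theorem stmt_11_general (α β : ℝ) (hβα : α < min β (1 - α)) :
    ∃ C > (0:ℝ), ∀ (t hbar D Lam : ℝ) (V : ℝ → ℝ) (I : ℝ → ℝ → ℝ),
      0 < hbar → hbar ≤ 1 → 0 < D → 0 ≤ Lam →
      V t = 0 →
      (∀ s' τ', s' ∈ Set.Icc t (t + hbar) → τ' ∈ Set.Icc t (t + hbar) →
        |V s' - V τ'| ≤ D * |s' - τ'| ^ (min β (1 - α))) →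
      (∀ τ s, t ≤ τ → τ ≤ s → s ≤ t + hbar →
        |I τ s| ≤ Lam * ∫ r in τ..s, (|V r| / (r - τ) ^ α
          + ∫ y in τ..r, |V r - V y| / (r - y) ^ (α + 1))) →
      ((∀ s, t ≤ s → s ≤ t + hbar →
          |I t s| ≤ C * D * Lam * (s - t) ^ (1 + min (β - α) (1 - 2*α)))
        ∧ Tendsto (fun s => I t s / (s - t))
            (nhdsWithin t (Set.Ioi t)) (nhds 0)) := by
  set γ := min β (1 - α)
  have hc : 0 < γ - α := sub_pos.2 hβα
  have hexp : min (β - α) (1 - 2 * α) = γ - α := by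
    rw [show 1 - 2 * α = 1 - α - α by ring, min_sub_sub_right]
  refine ⟨1 / (γ - α), by positivity, fun t hbar D Lam V I hbar0 _ _ hLam hVt hV hI => ?_⟩
  have hbound : ∀ s, t ≤ s → s ≤ t + hbar →
      |I t s| ≤ 1 / (γ - α) * D * Lam * (s - t) ^ (1 + (γ - α)) := by
    intro s hts hs
    have hVs : ∀ x ∈ Icc t s, ∀ y ∈ Icc t s, |V x - V y| ≤ D * |x - y| ^ γ :=
      fun x hx y hy => hV x y (Icc_subset_Icc_right hs hx) (Icc_subset_Icc_right hs hy)
    calc |I t s| ≤ Lam * fracNorm α V t s := hI t s le_rfl hts hs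
      _ ≤ Lam * (D * (s - t) ^ (1 + (γ - α)) / (γ - α)) := by
          gcongr
          exact fracNorm_le hβα hts hVt hVs
      _ = 1 / (γ - α) * D * Lam * (s - t) ^ (1 + (γ - α)) := by ring
  refine ⟨by rwa [hexp], tendsto_div_sub_nhdsGT_of_abs_le_rpow (K := 1 / (γ - α) * D * Lam) hc ?_⟩
  filter_upwards [Ioo_mem_nhdsGT (show t < t + hbar by linarith)] with s hs
  exact hbound s hs.1.le hs.2.le

theorem stmt_11 (α β : ℝ) (hα0 : 0 < α) (hα : α < 1/2)
    (hβ0 : 0 < β) (hβ1 : β ≤ 1) (hβα : α < min β (1 - α)) :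
    ∃ C > (0:ℝ), ∀ (t hbar D Lam : ℝ) (V : ℝ → ℝ) (I : ℝ → ℝ → ℝ),
      0 < hbar → hbar ≤ 1 → 0 < D → 0 ≤ Lam →
      V t = 0 →
      (∀ s' τ', s' ∈ Set.Icc t (t + hbar) → τ' ∈ Set.Icc t (t + hbar) →
        |V s' - V τ'| ≤ D * |s' - τ'| ^ (min β (1 - α))) →
      (∀ τ s, t ≤ τ → τ ≤ s → s ≤ t + hbar →
        |I τ s| ≤ Lam * ∫ r in τ..s, (|V r| / (r - τ) ^ α
          + ∫ y in τ..r, |V r - V y| / (r - y) ^ (α + 1))) →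
      ((∀ s, t ≤ s → s ≤ t + hbar →
          |I t s| ≤ C * D * Lam * (s - t) ^ (1 + min (β - α) (1 - 2*α)))
        ∧ Tendsto (fun s => I t s / (s - t))
            (nhdsWithin t (Set.Ioi t)) (nhds 0)) :=
  stmt_11_general α β hβα
end

section
/- Let $a_1,a_2,c_1,c_2\in\mathbb{R}$, $t\in[0,T)$, and $B:[0,T]\to\mathbb{R}$ continuous with $\limsup_{s\to t^+}\frac{B(s)-B(t)}{s-t}=+\infty$ and $\liminf_{s\to t^+}\frac{B(s)-B(t)}{s-t}=-\infty$. Suppose there exist $\bar h>0$ and a function $R$ with $R(s)=o(s-t)$ as $s\downarrow t$ such that $(a_2-a_1)(s-t)+(c_2-c_1)(B(s)-B(t))+R(s)\ge 0$ for all $s\in[t,t+\bar h]$. Then $c_1=c_2$ and $a_1\le a_2$. -/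
open Filter Topology

theorem stmt_13 (a₁ a₂ c₁ c₂ t T hbar : ℝ) (ht0 : 0 ≤ t) (htT : t < T)
    (hh : 0 < hbar) (B : ℝ → ℝ) (hB : Continuous B)
    (hsup : ∀ M : ℝ, ∃ᶠ s in nhdsWithin t (Set.Ioi t),
      M < (B s - B t) / (s - t))
    (hinf : ∀ M : ℝ, ∃ᶠ s in nhdsWithin t (Set.Ioi t),
      (B s - B t) / (s - t) < M)
    (R : ℝ → ℝ)
    (hR : Tendsto (fun s => R s / (s - t)) (nhdsWithin t (Set.Ioi t)) (nhds 0))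
    (hineq : ∀ s ∈ Set.Icc t (t + hbar),
      0 ≤ (a₂ - a₁) * (s - t) + (c₂ - c₁) * (B s - B t) + R s) :
    c₁ = c₂ ∧ a₁ ≤ a₂ := by
  set L := nhdsWithin t (Set.Ioi t) with hL
  have hIcc : ∀ᶠ s in L, s ∈ Set.Icc t (t + hbar) := by
    have h1 : ∀ᶠ s in nhds t, s < t + hbar :=
      Filter.Tendsto.eventually_lt_const (by linarith) tendsto_id
    refine (eventually_nhdsWithin_of_eventually_nhds h1).mp ?_
    filter_upwards [self_mem_nhdsWithin] with s hs hlt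
    exact ⟨le_of_lt hs, le_of_lt hlt⟩
  have hmem : ∀ᶠ s in L, t < s := self_mem_nhdsWithin
  have key : ∀ᶠ s in L,
      0 ≤ (a₂ - a₁) + (c₂ - c₁) * ((B s - B t) / (s - t)) + R s / (s - t) := by
    filter_upwards [hIcc, hmem] with s hs hts
    have hpos : 0 < s - t := by linarith
    have h := hineq s hs
    have := div_nonneg h (le_of_lt hpos)
    calc (0:ℝ) ≤ ((a₂ - a₁) * (s - t) + (c₂ - c₁) * (B s - B t) + R s) / (s - t) := this
      _ = (a₂ - a₁) + (c₂ - c₁) * ((B s - B t) / (s - t)) + R s / (s - t) := by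
        field_simp
  have hc : c₁ = c₂ := by
    by_contra hne
    rcases lt_or_gt_of_ne (sub_ne_zero.mpr (Ne.symm hne)) with hlt | hgt
    · -- c₂ - c₁ < 0 : use hsup
      set M := ((-(a₂ - a₁)) - 2) / (c₂ - c₁) with hM
      have hfreq := (hsup M).and_eventually (key.and (hR.eventually (eventually_abs_sub_lt 0 one_pos)))
      rcases hfreq.exists with ⟨s, hqM, h0, hRs⟩
      set q := (B s - B t) / (s - t)
      have h1 : (c₂ - c₁) * q < (c₂ - c₁) * M := by
        exact (mul_lt_mul_left_of_neg hlt).mpr hqM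
      have h2 : (c₂ - c₁) * M = -(a₂ - a₁) - 2 := by
        rw [hM, mul_div_cancel₀ _ (ne_of_lt hlt)]
      have h3 : R s / (s - t) < 1 := by
        have := hRs; rw [sub_zero] at this; exact lt_of_abs_lt this
      nlinarith [h0, h1, h2, h3]
    · -- c₂ - c₁ > 0 : use hinf
      set M := ((-(a₂ - a₁)) - 2) / (c₂ - c₁) with hM
      have hfreq := (hinf M).and_eventually (key.and (hR.eventually (eventually_abs_sub_lt 0 one_pos)))
      rcases hfreq.exists with ⟨s, hqM, h0, hRs⟩
      set q := (B s - B t) / (s - t)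
      have h1 : (c₂ - c₁) * q < (c₂ - c₁) * M := by
        exact (mul_lt_mul_iff_right₀ hgt).mpr hqM
      have h2 : (c₂ - c₁) * M = -(a₂ - a₁) - 2 := by
        rw [hM, mul_div_cancel₀ _ (ne_of_gt hgt)]
      have h3 : R s / (s - t) < 1 := by
        have := hRs; rw [sub_zero] at this; exact lt_of_abs_lt this
      nlinarith [h0, h1, h2, h3]
  refine ⟨hc, ?_⟩
  have key2 : ∀ᶠ s in L, 0 ≤ (a₂ - a₁) + R s / (s - t) := by
    filter_upwards [key] with s hs
    rw [hc] at hs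
    simpa using hs
  have htend : Tendsto (fun s => (a₂ - a₁) + R s / (s - t)) L (nhds (a₂ - a₁)) := by
    simpa using (tendsto_const_nhds.add hR)
  have : (0:ℝ) ≤ a₂ - a₁ := ge_of_tendsto htend key2
  linarith
end
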